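/- arXiv:2007.01170 — 8 statements merged into one kernel-verified Lean document; each statement's English description precedes it below -/
import Mathlib

section
/- For the extended n-body system ṙᵢ = vᵢ, mᵢ v̇ᵢ = ∑_{j≠i} γ mᵢ mⱼ (rⱼ − rᵢ)/r_{ij}³, ṙ_{ij} = (1/r_{ij}) ⟨rᵢ − rⱼ, vᵢ − vⱼ⟩ with r_{ij} = r_{ji} nonvanishing, the energy ∑ᵢ (mᵢ/2)‖vᵢ‖² − γ ∑_{i<j} mᵢ mⱼ / r_{ij} is constant in time. -/
/-!
The kinetic energy changes at the rate `∑ᵢ mᵢ⟪vᵢ, aᵢ⟫ = ∑ᵢ ∑_{j≠i} γ mᵢ mⱼ ⟪vᵢ, rⱼ - rᵢ⟫ / Rᵢⱼ³`.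
Pairing the terms `(i, j)` and `(j, i)` and using `Rᵢⱼ = Rⱼᵢ`, this becomes
`-γ ∑_{i<j} mᵢ mⱼ ⟪rᵢ - rⱼ, vᵢ - vⱼ⟫ / Rᵢⱼ³`, which by the equation for `Ṙᵢⱼ` is exactly the rate of
change of `γ ∑_{i<j} mᵢ mⱼ / Rᵢⱼ`.
-/

open Finset

open scoped RealInnerProductSpace

theorem Finset.sum_sum_erase_eq_sum_sum_lt_add {ι M : Type*} [Fintype ι] [LinearOrder ι]
    [AddCommMonoid M] (F : ι → ι → M) :
    ∑ i, ∑ j ∈ univ.erase i, F i j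
      = ∑ i, ∑ j ∈ univ.filter (fun j => i < j), (F i j + F j i) := by
  have herase : ∀ i : ι, univ.erase i = univ.filter (i < ·) ∪ univ.filter (· < i) := by
    intro i; ext j
    simp only [mem_erase, mem_union, mem_filter, mem_univ, true_and, and_true]
    exact ne_comm.trans ne_iff_lt_or_gt
  have hdisj : ∀ i : ι, Disjoint (univ.filter (i < ·)) (univ.filter (· < i)) := fun i =>
    disjoint_filter.2 fun j _ hij hji => lt_asymm hij hji
  simp only [herase, sum_union (hdisj _), sum_add_distrib]
  congr 1
  exact sum_comm' (by simp)

theorem hasDerivAt_sum_half_mul_norm_sq {ι E : Type*} [Fintype ι] [NormedAddCommGroup E]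
    [InnerProductSpace ℝ E] (m : ι → ℝ) {v : ι → ℝ → E} {a : ι → E} {t : ℝ}
    (hva : ∀ i, HasDerivAt (v i) (a i) t) :
    HasDerivAt (fun u => ∑ i, m i / 2 * ‖v i u‖ ^ 2) (∑ i, m i * ⟪v i t, a i⟫) t := by
  refine (HasDerivAt.fun_sum fun i _ => (hva i).norm_sq.const_mul (m i / 2)).congr_deriv ?_
  exact sum_congr rfl fun i _ => by ring

theorem hasDerivAt_sum_sum_lt_div {ι : Type*} [Fintype ι] [LinearOrder ι] (c : ι → ι → ℝ)
    {R : ι → ι → ℝ → ℝ} {R' : ι → ι → ℝ} {t : ℝ}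
    (hR0 : ∀ i j, i ≠ j → R i j t ≠ 0)
    (hdR : ∀ i j, i ≠ j → HasDerivAt (R i j) (R' i j) t) :
    HasDerivAt (fun u => ∑ i, ∑ j ∈ univ.filter (fun j => i < j), c i j / R i j u)
      (∑ i, ∑ j ∈ univ.filter (fun j => i < j), c i j * (-R' i j / R i j t ^ 2)) t := by
  refine HasDerivAt.fun_sum fun i _ => HasDerivAt.fun_sum fun j hj => ?_
  have hij : i ≠ j := (mem_filter.1 hj).2.ne
  exact ((hdR i j hij).inv (hR0 i j hij)).const_mul (c i j)

theorem inner_add_inner_sub_eq_neg_inner {E : Type*} [NormedAddCommGroup E]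
    [InnerProductSpace ℝ E] (x y v w : E) :
    ⟪v, y - x⟫ + ⟪w, x - y⟫ = -⟪x - y, v - w⟫ := by
  simp only [inner_sub_left, inner_sub_right, real_inner_comm x, real_inner_comm y]
  ring

theorem sum_mul_inner_eq_of_inverse_square_forces {ι E : Type*} [Fintype ι] [LinearOrder ι]
    [NormedAddCommGroup E] [InnerProductSpace ℝ E] (γ : ℝ) (m : ι → ℝ) (r v a : ι → E)
    (R : ι → ι → ℝ) (hRsymm : ∀ i j, R i j = R j i)
    (hforce : ∀ i,
      m i • a i = ∑ j ∈ univ.erase i, (γ * m i * m j / R i j ^ 3) • (r j - r i)) :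
    ∑ i, m i * ⟪v i, a i⟫ = γ * ∑ i, ∑ j ∈ univ.filter (fun j => i < j),
      m i * m j * (-(1 / R i j * ⟪r i - r j, v i - v j⟫) / R i j ^ 2) := by
  have hpower : ∀ i, m i * ⟪v i, a i⟫
      = ∑ j ∈ univ.erase i, γ * m i * m j / R i j ^ 3 * ⟪v i, r j - r i⟫ := fun i => by
    rw [← real_inner_smul_right, hforce i, inner_sum]
    simp only [real_inner_smul_right]
  simp only [hpower, sum_sum_erase_eq_sum_sum_lt_add, mul_sum]
  refine sum_congr rfl fun i _ => sum_congr rfl fun j _ => ?_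
  rw [hRsymm j i]
  linear_combination
    γ * m i * m j / R i j ^ 3 * inner_add_inner_sub_eq_neg_inner (r i) (r j) (v i) (v j)

theorem stmt7_general (n : ℕ) (γ : ℝ)
    (m : Fin n → ℝ)
    (r v a : Fin n → ℝ → EuclideanSpace ℝ (Fin 3))
    (R : Fin n → Fin n → ℝ → ℝ)
    (hRsymm : ∀ i j, R i j = R j i)
    (hR0 : ∀ i j, i ≠ j → ∀ t, R i j t ≠ 0)
    (hva : ∀ i t, HasDerivAt (v i) (a i t) t)
    (hforce : ∀ i t, m i • a i t =
      ∑ j ∈ Finset.univ.erase i, ((γ * m i * m j) / (R i j t) ^ 3) • (r j t - r i t))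
    (hdR : ∀ i j, i ≠ j → ∀ t, HasDerivAt (R i j)
      ((1 / R i j t) * (inner ℝ (r i t - r j t) (v i t - v j t) : ℝ)) t) :
    ∀ s t : ℝ,
      (∑ i, (m i / 2) * ‖v i s‖ ^ 2)
        - γ * ∑ i, ∑ j ∈ Finset.univ.filter (fun j => i < j), m i * m j / R i j s
      = (∑ i, (m i / 2) * ‖v i t‖ ^ 2)
        - γ * ∑ i, ∑ j ∈ Finset.univ.filter (fun j => i < j), m i * m j / R i j t := by
  have hconst : ∀ t, HasDerivAt (fun u => (∑ i, (m i / 2) * ‖v i u‖ ^ 2)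
      - γ * ∑ i, ∑ j ∈ univ.filter (fun j => i < j), m i * m j / R i j u) 0 t := fun t => by
    have hE := (hasDerivAt_sum_half_mul_norm_sq m fun i => hva i t).sub
      ((hasDerivAt_sum_sum_lt_div (fun i j => m i * m j) (fun i j hij => hR0 i j hij t)
        fun i j hij => hdR i j hij t).const_mul γ)
    rwa [sum_mul_inner_eq_of_inverse_square_forces γ m (r · t) (v · t) (a · t) (R · · t)
      (fun i j => congrFun (hRsymm i j) t) (hforce · t), sub_self] at hE
  exact fun s t => is_const_of_deriv_eq_zero (fun u => (hconst u).differentiableAt)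
    (fun u => (hconst u).deriv) s t

/-- For the extended (rationalized) n-body system, the energy
`∑ᵢ (mᵢ/2)‖vᵢ‖² − γ ∑_{i<j} mᵢ mⱼ / R i j` is constant in time. -/
theorem stmt7 (n : ℕ) (γ : ℝ) (hγ : 0 < γ)
    (m : Fin n → ℝ) (hm : ∀ i, 0 < m i)
    (r v a : Fin n → ℝ → EuclideanSpace ℝ (Fin 3))
    (R : Fin n → Fin n → ℝ → ℝ)
    (hRsymm : ∀ i j, R i j = R j i)
    (hR0 : ∀ i j, i ≠ j → ∀ t, R i j t ≠ 0)
    (hrv : ∀ i t, HasDerivAt (r i) (v i t) t)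
    (hva : ∀ i t, HasDerivAt (v i) (a i t) t)
    (hforce : ∀ i t, m i • a i t =
      ∑ j ∈ Finset.univ.erase i, ((γ * m i * m j) / (R i j t) ^ 3) • (r j t - r i t))
    (hdR : ∀ i j, i ≠ j → ∀ t, HasDerivAt (R i j)
      ((1 / R i j t) * (inner ℝ (r i t - r j t) (v i t - v j t) : ℝ)) t) :
    ∀ s t : ℝ,
      (∑ i, (m i / 2) * ‖v i s‖ ^ 2)
        - γ * ∑ i, ∑ j ∈ Finset.univ.filter (fun j => i < j), m i * m j / R i j s
      = (∑ i, (m i / 2) * ‖v i t‖ ^ 2)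
        - γ * ∑ i, ∑ j ∈ Finset.univ.filter (fun j => i < j), m i * m j / R i j t :=
  stmt7_general n γ m r v a R hRsymm hR0 hva hforce hdR
end

section
/- For the fully extended n-body system ṙᵢ = vᵢ, mᵢ v̇ᵢ = ∑_{j≠i} γ mᵢ mⱼ ρ_{ij} (rⱼ − rᵢ)/r_{ij}², ṙ_{ij} = (1/r_{ij}) ⟨rᵢ − rⱼ, vᵢ − vⱼ⟩, ρ̇_{ij} = −(ρ_{ij}/r_{ij}²) ⟨rᵢ − rⱼ, vᵢ − vⱼ⟩ with r_{ij} = r_{ji}, ρ_{ij} = ρ_{ji} and r_{ij} nonvanishing, the quadratic energy ∑ᵢ (mᵢ/2)‖vᵢ‖² − γ ∑_{i<j} mᵢ mⱼ ρ_{ij} is constant in time. -/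
/-!
The kinetic energy changes at the rate `∑ᵢ ⟪vᵢ, mᵢ aᵢ⟫`, the power of the forces. Grouping the
force terms in pairs `{i, j}` and using the symmetry of `r_{ij}` and `ρ_{ij}`, the pair `{i, j}`
contributes `-γ mᵢ mⱼ (ρ_{ij} / r_{ij}²) ⟪rᵢ - rⱼ, vᵢ - vⱼ⟫`, which is `γ mᵢ mⱼ ρ̇_{ij}`.
Hence the energy has derivative zero everywhere and is constant.
-/

open Finset

theorem Finset.sum_sum_erase_eq_sum_sum_lt {ι M : Type*} [Fintype ι] [LinearOrder ι]
    [AddCommMonoid M] (F : ι → ι → M) :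
    ∑ i, ∑ j ∈ univ.erase i, F i j = ∑ i, ∑ j ∈ univ.filter (i < ·), (F i j + F j i) := by
  have hswap : ∑ i, ∑ j, (if j < i then F i j else 0) = ∑ i, ∑ j, if i < j then F j i else 0 :=
    Finset.sum_comm
  have hsplit : ∀ i j, (if j ≠ i then F i j else 0)
      = (if i < j then F i j else 0) + if j < i then F i j else 0 := by
    intro i j
    rcases lt_trichotomy i j with h | rfl | h
    · simp [h, h.ne', asymm h]
    · simp
    · simp [h, h.ne, asymm h]
  simp only [← filter_ne' univ, sum_filter, hsplit, sum_add_distrib, hswap]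

section InnerProductSpace

variable {E : Type*} [NormedAddCommGroup E] [InnerProductSpace ℝ E]

theorem hasDerivAt_half_mul_norm_sq {v : ℝ → E} {a : E} {t : ℝ} (c : ℝ)
    (hv : HasDerivAt v a t) :
    HasDerivAt (fun s => c / 2 * ‖v s‖ ^ 2) (inner ℝ (v t) (c • a)) t :=
  (hv.norm_sq.const_mul (c / 2)).congr_deriv (by rw [real_inner_smul_right]; ring)

theorem inner_sub_add_inner_sub_eq_neg_inner_sub_sub (c : ℝ) (ri rj vi vj : E) :
    c * inner ℝ vi (rj - ri) + c * inner ℝ vj (ri - rj) = -c * inner ℝ (ri - rj) (vi - vj) := by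
  simp only [inner_sub_left, inner_sub_right, real_inner_comm ri, real_inner_comm rj]
  ring

theorem sum_inner_smul_eq_sum_pairs {ι : Type*} [Fintype ι] [LinearOrder ι] (γ : ℝ) (m : ι → ℝ)
    (r v a : ι → E) (R P : ι → ι → ℝ)
    (hRsymm : ∀ i j, R i j = R j i) (hPsymm : ∀ i j, P i j = P j i)
    (hforce : ∀ i, m i • a i =
      ∑ j ∈ univ.erase i, ((γ * m i * m j * P i j) / (R i j) ^ 2) • (r j - r i)) :
    ∑ i, inner ℝ (v i) (m i • a i)
      = γ * ∑ i, ∑ j ∈ univ.filter (i < ·),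
          m i * m j * (-(P i j / (R i j) ^ 2) * inner ℝ (r i - r j) (v i - v j)) := by
  calc ∑ i, inner ℝ (v i) (m i • a i)
      = ∑ i, ∑ j ∈ univ.erase i,
          (γ * m i * m j * P i j) / (R i j) ^ 2 * inner ℝ (v i) (r j - r i) := by
        simp only [hforce, inner_sum, real_inner_smul_right]
    _ = ∑ i, ∑ j ∈ univ.filter (i < ·),
          ((γ * m i * m j * P i j) / (R i j) ^ 2 * inner ℝ (v i) (r j - r i)
            + (γ * m j * m i * P j i) / (R j i) ^ 2 * inner ℝ (v j) (r i - r j)) :=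
        Finset.sum_sum_erase_eq_sum_sum_lt _
    _ = _ := by
        simp only [mul_sum]
        refine sum_congr rfl fun i _ => sum_congr rfl fun j _ => ?_
        rw [hRsymm j i, hPsymm j i]
        linear_combination inner_sub_add_inner_sub_eq_neg_inner_sub_sub
          (γ * m i * m j * P i j / R i j ^ 2) (r i) (r j) (v i) (v j)

end InnerProductSpace

theorem stmt9_general (n : ℕ) (γ : ℝ)
    (m : Fin n → ℝ)
    (r v a : Fin n → ℝ → EuclideanSpace ℝ (Fin 3))
    (R P : Fin n → Fin n → ℝ → ℝ)
    (hRsymm : ∀ i j, R i j = R j i) (hPsymm : ∀ i j, P i j = P j i)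
    (hva : ∀ i t, HasDerivAt (v i) (a i t) t)
    (hforce : ∀ i t, m i • a i t =
      ∑ j ∈ Finset.univ.erase i, ((γ * m i * m j * P i j t) / (R i j t) ^ 2) • (r j t - r i t))
    (hdP : ∀ i j, i ≠ j → ∀ t, HasDerivAt (P i j)
      (-(P i j t / (R i j t) ^ 2) * (inner ℝ (r i t - r j t) (v i t - v j t) : ℝ)) t) :
    ∀ s t : ℝ,
      (∑ i, (m i / 2) * ‖v i s‖ ^ 2)
        - γ * ∑ i, ∑ j ∈ Finset.univ.filter (fun j => i < j), m i * m j * P i j s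
      = (∑ i, (m i / 2) * ‖v i t‖ ^ 2)
        - γ * ∑ i, ∑ j ∈ Finset.univ.filter (fun j => i < j), m i * m j * P i j t := by
  have hE : ∀ t, HasDerivAt (fun s => (∑ i, (m i / 2) * ‖v i s‖ ^ 2)
      - γ * ∑ i, ∑ j ∈ univ.filter (fun j => i < j), m i * m j * P i j s) 0 t := by
    intro t
    have hkin := HasDerivAt.fun_sum (u := univ) fun i _ =>
      hasDerivAt_half_mul_norm_sq (m i) (hva i t)
    have hpot := (HasDerivAt.fun_sum (u := univ) fun i _ =>
      HasDerivAt.fun_sum (u := univ.filter (i < ·)) fun j hj =>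
        (hdP i j (mem_filter.mp hj).2.ne t).const_mul (m i * m j)).const_mul γ
    refine (hkin.sub hpot).congr_deriv ?_
    rw [sum_inner_smul_eq_sum_pairs γ m (r · t) (v · t) (a · t) (R · · t) (P · · t)
      (fun i j => congrFun (hRsymm i j) t) (fun i j => congrFun (hPsymm i j) t)
      (fun i => hforce i t), sub_self]
  exact is_const_of_deriv_eq_zero (fun t => (hE t).differentiableAt) (fun t => (hE t).deriv)

/-- For the fully extended n-body system, the quadratic energy
`∑ᵢ (mᵢ/2)‖vᵢ‖² − γ ∑_{i<j} mᵢ mⱼ ρᵢⱼ` is constant in time. -/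
theorem stmt9 (n : ℕ) (γ : ℝ) (hγ : 0 < γ)
    (m : Fin n → ℝ) (hm : ∀ i, 0 < m i)
    (r v a : Fin n → ℝ → EuclideanSpace ℝ (Fin 3))
    (R P : Fin n → Fin n → ℝ → ℝ)
    (hRsymm : ∀ i j, R i j = R j i) (hPsymm : ∀ i j, P i j = P j i)
    (hR0 : ∀ i j, i ≠ j → ∀ t, R i j t ≠ 0)
    (hrv : ∀ i t, HasDerivAt (r i) (v i t) t)
    (hva : ∀ i t, HasDerivAt (v i) (a i t) t)
    (hforce : ∀ i t, m i • a i t =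
      ∑ j ∈ Finset.univ.erase i, ((γ * m i * m j * P i j t) / (R i j t) ^ 2) • (r j t - r i t))
    (hdR : ∀ i j, i ≠ j → ∀ t, HasDerivAt (R i j)
      ((1 / R i j t) * (inner ℝ (r i t - r j t) (v i t - v j t) : ℝ)) t)
    (hdP : ∀ i j, i ≠ j → ∀ t, HasDerivAt (P i j)
      (-(P i j t / (R i j t) ^ 2) * (inner ℝ (r i t - r j t) (v i t - v j t) : ℝ)) t) :
    ∀ s t : ℝ,
      (∑ i, (m i / 2) * ‖v i s‖ ^ 2)
        - γ * ∑ i, ∑ j ∈ Finset.univ.filter (fun j => i < j), m i * m j * P i j s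
      = (∑ i, (m i / 2) * ‖v i t‖ ^ 2)
        - γ * ∑ i, ∑ j ∈ Finset.univ.filter (fun j => i < j), m i * m j * P i j t :=
  stmt9_general n γ m r v a R P hRsymm hPsymm hva hforce hdP
end

section
/- If a solution of the fully extended n-body system satisfies at time t₀ the constraints r_{ij}(t₀)² = ‖rᵢ(t₀) − rⱼ(t₀)‖², r_{ij}(t₀) = ‖rᵢ(t₀) − rⱼ(t₀)‖ > 0, and r_{ij}(t₀) ρ_{ij}(t₀) = 1 for all i ≠ j, and r_{ij}(t) > 0 for all t, then these constraints hold for all time t, and consequently (rᵢ, vᵢ) solves the original n-body problem mᵢ r̈ᵢ = ∑_{j≠i} γ mᵢ mⱼ (rⱼ − rᵢ)/‖rⱼ − rᵢ‖³. -/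
/-! Along the flow, `r_{ij}² − ‖rᵢ − rⱼ‖²` and `r_{ij} ρ_{ij}` have zero derivative, hence are
conserved; with the initial data they vanish resp. equal `1` for all time. Positivity of `r_{ij}`
picks out the root `r_{ij} = ‖rᵢ − rⱼ‖`, and substituting `ρ_{ij} = 1 / r_{ij}` into the force
gives the Newtonian `1 / ‖rⱼ − rᵢ‖³` law. -/

open InnerProductSpace

lemma eq_of_forall_hasDerivAt_zero {F : Type*} [NormedAddCommGroup F] [NormedSpace ℝ F]
    {f : ℝ → F} (hf : ∀ t, HasDerivAt f 0 t) (t t₀ : ℝ) : f t = f t₀ :=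
  is_const_of_deriv_eq_zero (fun s => (hf s).differentiableAt) (fun s => (hf s).deriv) t t₀

section Conservation

variable {E : Type*} [NormedAddCommGroup E] [InnerProductSpace ℝ E]
  {x w : ℝ → E} {R P g : ℝ → ℝ}

lemma sq_sub_norm_sq_eq_of_hasDerivAt (hx : ∀ t, HasDerivAt x (w t) t)
    (hR : ∀ t, HasDerivAt R (1 / R t * ⟪x t, w t⟫_ℝ) t) (hR0 : ∀ t, R t ≠ 0) (t t₀ : ℝ) :
    R t ^ 2 - ‖x t‖ ^ 2 = R t₀ ^ 2 - ‖x t₀‖ ^ 2 := by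
  refine eq_of_forall_hasDerivAt_zero (f := fun s => R s ^ 2 - ‖x s‖ ^ 2) (fun s => ?_) t t₀
  have hnorm : HasDerivAt (fun s => ‖x s‖ ^ 2) (2 * ⟪x s, w s⟫_ℝ) s := by
    simpa only [real_inner_self_eq_norm_sq, real_inner_comm (w s), two_mul] using
      (hx s).inner ℝ (hx s)
  refine (((hR s).pow 2).sub hnorm).congr_deriv ?_
  field_simp [hR0 s]
  ring

lemma mul_eq_of_hasDerivAt (hR : ∀ t, HasDerivAt R (1 / R t * g t) t)
    (hP : ∀ t, HasDerivAt P (-(P t / R t ^ 2) * g t) t) (hR0 : ∀ t, R t ≠ 0) (t t₀ : ℝ) :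
    R t * P t = R t₀ * P t₀ := by
  refine eq_of_forall_hasDerivAt_zero (f := fun s => R s * P s) (fun s => ?_) t t₀
  refine ((hR s).mul (hP s)).congr_deriv ?_
  field_simp [hR0 s]
  ring

lemma eq_norm_of_hasDerivAt (hx : ∀ t, HasDerivAt x (w t) t)
    (hR : ∀ t, HasDerivAt R (1 / R t * ⟪x t, w t⟫_ℝ) t) (hRpos : ∀ t, 0 < R t) {t₀ : ℝ}
    (h₀ : R t₀ = ‖x t₀‖) (t : ℝ) : R t = ‖x t‖ := by
  have hsq := sq_sub_norm_sq_eq_of_hasDerivAt hx hR (fun s => (hRpos s).ne') t t₀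
  rw [h₀, sub_self, sub_eq_zero] at hsq
  exact (pow_left_inj₀ (hRpos t).le (norm_nonneg _) two_ne_zero).mp hsq

end Conservation

lemma mul_div_sq_eq_div_cube_of_mul_eq_one {R P : ℝ} (c : ℝ) (h : R * P = 1) :
    c * P / R ^ 2 = c / R ^ 3 := by
  rw [eq_inv_of_mul_eq_one_right h]
  ring

theorem stmt11_general (n : ℕ) (γ : ℝ) (t₀ : ℝ)
    (m : Fin n → ℝ)
    (r v a : Fin n → ℝ → EuclideanSpace ℝ (Fin 3))
    (R P : Fin n → Fin n → ℝ → ℝ)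
    (hrv : ∀ i t, HasDerivAt (r i) (v i t) t)
    (hforce : ∀ i t, m i • a i t =
      ∑ j ∈ Finset.univ.erase i, ((γ * m i * m j * P i j t) / (R i j t) ^ 2) • (r j t - r i t))
    (hdR : ∀ i j, i ≠ j → ∀ t, HasDerivAt (R i j)
      ((1 / R i j t) * (inner ℝ (r i t - r j t) (v i t - v j t) : ℝ)) t)
    (hdP : ∀ i j, i ≠ j → ∀ t, HasDerivAt (P i j)
      (-(P i j t / (R i j t) ^ 2) * (inner ℝ (r i t - r j t) (v i t - v j t) : ℝ)) t)
    (hRpos : ∀ i j, i ≠ j → ∀ t, 0 < R i j t)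
    (hinit : ∀ i j, i ≠ j →
      R i j t₀ = ‖r i t₀ - r j t₀‖ ∧ 0 < R i j t₀ ∧ R i j t₀ * P i j t₀ = 1) :
    (∀ i j, i ≠ j → ∀ t, R i j t = ‖r i t - r j t‖ ∧ R i j t * P i j t = 1) ∧
    (∀ i t, m i • a i t =
      ∑ j ∈ Finset.univ.erase i,
        ((γ * m i * m j) / ‖r j t - r i t‖ ^ 3) • (r j t - r i t)) := by
  have constraints : ∀ i j, i ≠ j → ∀ t, R i j t = ‖r i t - r j t‖ ∧ R i j t * P i j t = 1 := by
    intro i j hij t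
    obtain ⟨hR₀, -, hRP₀⟩ := hinit i j hij
    have hx : ∀ s, HasDerivAt (fun u => r i u - r j u) (v i s - v j s) s :=
      fun s => (hrv i s).sub (hrv j s)
    refine ⟨eq_norm_of_hasDerivAt hx (hdR i j hij) (hRpos i j hij) hR₀ t, ?_⟩
    rw [mul_eq_of_hasDerivAt (hdR i j hij) (hdP i j hij) (fun s => (hRpos i j hij s).ne') t t₀,
      hRP₀]
  refine ⟨constraints, fun i t => ?_⟩
  rw [hforce i t]
  refine Finset.sum_congr rfl fun j hj => ?_
  obtain ⟨hR, hRP⟩ := constraints i j (Finset.ne_of_mem_erase hj).symm t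
  rw [norm_sub_rev, ← hR, mul_div_sq_eq_div_cube_of_mul_eq_one _ hRP]

/-- If a solution of the fully extended n-body system satisfies at time `t₀` the constraints
`R i j t₀ = ‖rᵢ(t₀) − rⱼ(t₀)‖ > 0` and `R i j t₀ * ρ i j t₀ = 1` for all `i ≠ j`, and
`R i j t > 0` for all `t`, then the constraints hold for all time, and `(rᵢ, vᵢ)` solves
the original n-body problem. -/
theorem stmt11 (n : ℕ) (γ : ℝ) (hγ : 0 < γ) (t₀ : ℝ)
    (m : Fin n → ℝ) (hm : ∀ i, 0 < m i)
    (r v a : Fin n → ℝ → EuclideanSpace ℝ (Fin 3))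
    (R P : Fin n → Fin n → ℝ → ℝ)
    (hRsymm : ∀ i j, R i j = R j i) (hPsymm : ∀ i j, P i j = P j i)
    (hR0 : ∀ i j, i ≠ j → ∀ t, R i j t ≠ 0)
    (hrv : ∀ i t, HasDerivAt (r i) (v i t) t)
    (hva : ∀ i t, HasDerivAt (v i) (a i t) t)
    (hforce : ∀ i t, m i • a i t =
      ∑ j ∈ Finset.univ.erase i, ((γ * m i * m j * P i j t) / (R i j t) ^ 2) • (r j t - r i t))
    (hdR : ∀ i j, i ≠ j → ∀ t, HasDerivAt (R i j)
      ((1 / R i j t) * (inner ℝ (r i t - r j t) (v i t - v j t) : ℝ)) t)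
    (hdP : ∀ i j, i ≠ j → ∀ t, HasDerivAt (P i j)
      (-(P i j t / (R i j t) ^ 2) * (inner ℝ (r i t - r j t) (v i t - v j t) : ℝ)) t)
    (hRpos : ∀ i j, i ≠ j → ∀ t, 0 < R i j t)
    (hinit : ∀ i j, i ≠ j →
      R i j t₀ = ‖r i t₀ - r j t₀‖ ∧ 0 < R i j t₀ ∧ R i j t₀ * P i j t₀ = 1) :
    (∀ i j, i ≠ j → ∀ t, R i j t = ‖r i t - r j t‖ ∧ R i j t * P i j t = 1) ∧
    (∀ i t, m i • a i t =
      ∑ j ∈ Finset.univ.erase i,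
        ((γ * m i * m j) / ‖r j t - r i t‖ ^ 3) • (r j t - r i t)) :=
  stmt11_general n γ t₀ m r v a R P hrv hforce hdR hdP hRpos hinit
end

section
/- Let f : ℝⁿ → ℝⁿ and let x, x̂ ∈ ℝⁿ satisfy the midpoint scheme x̂ − x = f((x̂ + x)/2) · Δt. If g(y) = B(y, y) is a quadratic form with symmetric bilinear form B satisfying B(y, f(y)) = 0 for all y, then g(x̂) = g(x). -/
/-!
Since `x̂ - x` is a multiple of `f m` and `x̂ + x` a multiple of `m`, where `m` is the midpoint,
the hypothesis `B m (f m) = 0` gives `B (x̂ - x) (x̂ + x) = 0`; by symmetry of `B` the left side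
is `B x̂ x̂ - B x x`.
-/

section

variable {R M : Type*} [CommRing R] [AddCommGroup M] [Module R M]

theorem LinearMap.apply_sub_add_of_symm (B : M →ₗ[R] M →ₗ[R] R) (hsymm : ∀ a b, B a b = B b a)
    (u v : M) : B (u - v) (u + v) = B u u - B v v := by
  simp only [map_sub, map_add, LinearMap.sub_apply]
  rw [hsymm v u]
  ring

theorem LinearMap.apply_self_eq_of_sub_smul_of_add_smul (B : M →ₗ[R] M →ₗ[R] R)
    (hsymm : ∀ a b, B a b = B b a) (f : M → M) (horth : ∀ y, B y (f y) = 0) {u v m : M}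
    {c a : R} (hsub : u - v = c • f m) (hadd : u + v = a • m) : B u u = B v v := by
  have hzero : B (u - v) (u + v) = 0 := by
    rw [hsub, hadd, map_smul, map_smul, LinearMap.smul_apply, hsymm, horth, smul_zero,
      smul_zero]
  rw [← sub_eq_zero, ← B.apply_sub_add_of_symm hsymm, hzero]

end

/-- The midpoint scheme preserves any quadratic form `g y = B y y` whose symmetric
bilinear form `B` satisfies `B y (f y) = 0` for all `y`. -/
theorem stmt12 {n : ℕ} (f : (Fin n → ℝ) → (Fin n → ℝ))
    (B : (Fin n → ℝ) →ₗ[ℝ] (Fin n → ℝ) →ₗ[ℝ] ℝ)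
    (hsymm : ∀ a b, B a b = B b a)
    (horth : ∀ y, B y (f y) = 0)
    (Δt : ℝ) (x xh : Fin n → ℝ)
    (hstep : xh - x = Δt • f ((xh + x) / 2)) :
    B xh xh = B x x := by
  have hadd : xh + x = (2 : ℝ) • ((xh + x) / 2) := by
    funext i
    simp only [Pi.smul_apply, Pi.div_apply, Pi.ofNat_apply, smul_eq_mul]
    ring
  exact B.apply_self_eq_of_sub_smul_of_add_smul hsymm f horth hstep hadd
end

section
/- Consider the midpoint scheme applied to the fully extended n-body system: given a state (rᵢ, vᵢ, r_{ij}, ρ_{ij}) and a new state (r̂ᵢ, v̂ᵢ, r̂_{ij}, ρ̂_{ij}) satisfying x̂ − x = Δt F((x + x̂)/2) where F is the right-hand side of the extended system (with midpoint values of r_{ij} nonzero). Then ∑ᵢ mᵢ v̂ᵢ = ∑ᵢ mᵢ vᵢ. -/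
/-! The momentum update `mᵢ (v̂ᵢ - vᵢ)` is `Δt` times a sum of pairwise forces `cᵢⱼ • (r̄ⱼ - r̄ᵢ)`
at the midpoint positions. The coefficients `cᵢⱼ` are symmetric, since the midpoint values of the
symmetric quantities `r_{ij}` and `ρ_{ij}` are symmetric, so the forces cancel in pairs
(Newton's third law survives the discretisation) and the total momentum does not change. -/

namespace Finset

theorem sum_sum_eq_zero_of_antisymm {ι M : Type*} [Fintype ι] [AddCommGroup M]
    [IsAddTorsionFree M] (f : ι → ι → M) (hf : ∀ i j, f i j = -f j i) :
    ∑ i, ∑ j, f i j = 0 := by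
  refine self_eq_neg.mp ?_
  calc ∑ i, ∑ j, f i j = ∑ i, ∑ j, -f j i := by simp only [← hf]
    _ = -∑ i, ∑ j, f i j := by rw [sum_comm]; simp only [sum_neg_distrib]

theorem sum_sum_erase_smul_sub_eq_zero_of_symm {ι R E : Type*} [Fintype ι] [DecidableEq ι] [Ring R]
    [AddCommGroup E] [Module R E] [IsAddTorsionFree E] (c : ι → ι → R) (hc : ∀ i j, c i j = c j i)
    (x : ι → E) :
    ∑ i, ∑ j ∈ univ.erase i, c i j • (x j - x i) = 0 := by
  have hdiag (i : ι) : ∑ j ∈ univ.erase i, c i j • (x j - x i) = ∑ j, c i j • (x j - x i) :=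
    sum_erase _ (by rw [sub_self, smul_zero])
  simp only [hdiag]
  exact sum_sum_eq_zero_of_antisymm _ fun i j => by rw [hc, ← smul_neg, neg_sub]

end Finset

theorem stmt14_general (n : ℕ) (γ Δt : ℝ)
    (m : Fin n → ℝ)
    (v vh rm : Fin n → EuclideanSpace ℝ (Fin 3))
    (R P Rh Ph Rm Pm : Fin n → Fin n → ℝ)
    (hRsymm : ∀ i j, R i j = R j i) (hPsymm : ∀ i j, P i j = P j i)
    (hRhsymm : ∀ i j, Rh i j = Rh j i) (hPhsymm : ∀ i j, Ph i j = Ph j i)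
    (hRm : ∀ i j, Rm i j = (R i j + Rh i j) / 2)
    (hPm : ∀ i j, Pm i j = (P i j + Ph i j) / 2)
    (hstep_v : ∀ i, m i • (vh i - v i) =
      Δt • ∑ j ∈ Finset.univ.erase i,
        ((γ * m i * m j * Pm i j) / (Rm i j) ^ 2) • (rm j - rm i)) :
    ∑ i, m i • vh i = ∑ i, m i • v i := by
  have hforce_symm (i j : Fin n) :
      γ * m i * m j * Pm i j / Rm i j ^ 2 = γ * m j * m i * Pm j i / Rm j i ^ 2 := by
    rw [hPm, hPm, hRm, hRm, hPsymm, hPhsymm, hRsymm, hRhsymm, mul_right_comm γ]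
  have : IsAddTorsionFree (EuclideanSpace ℝ (Fin 3)) := .of_isTorsionFree ℝ _
  rw [← sub_eq_zero, ← Finset.sum_sub_distrib]
  simp only [← smul_sub, hstep_v, ← Finset.smul_sum]
  rw [Finset.sum_sum_erase_smul_sub_eq_zero_of_symm (fun i j => γ * m i * m j * Pm i j / Rm i j ^ 2)
    hforce_symm, smul_zero]

/-- One step of the midpoint scheme for the fully extended n-body system preserves
the total momentum `∑ᵢ mᵢ vᵢ`. -/
theorem stmt14 (n : ℕ) (γ Δt : ℝ) (hγ : 0 < γ)
    (m : Fin n → ℝ) (hm : ∀ i, 0 < m i)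
    (r v rh vh rm vm : Fin n → EuclideanSpace ℝ (Fin 3))
    (R P Rh Ph Rm Pm : Fin n → Fin n → ℝ)
    (hRsymm : ∀ i j, R i j = R j i) (hPsymm : ∀ i j, P i j = P j i)
    (hRhsymm : ∀ i j, Rh i j = Rh j i) (hPhsymm : ∀ i j, Ph i j = Ph j i)
    (hrm : ∀ i, rm i = (2 : ℝ)⁻¹ • (r i + rh i))
    (hvm : ∀ i, vm i = (2 : ℝ)⁻¹ • (v i + vh i))
    (hRm : ∀ i j, Rm i j = (R i j + Rh i j) / 2)
    (hPm : ∀ i j, Pm i j = (P i j + Ph i j) / 2)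
    (hRm0 : ∀ i j, i ≠ j → Rm i j ≠ 0)
    (hstep_r : ∀ i, rh i - r i = Δt • vm i)
    (hstep_v : ∀ i, m i • (vh i - v i) =
      Δt • ∑ j ∈ Finset.univ.erase i,
        ((γ * m i * m j * Pm i j) / (Rm i j) ^ 2) • (rm j - rm i))
    (hstep_R : ∀ i j, i ≠ j → Rh i j - R i j =
      Δt * ((1 / Rm i j) * (inner ℝ (rm i - rm j) (vm i - vm j) : ℝ)))
    (hstep_P : ∀ i j, i ≠ j → Ph i j - P i j =
      Δt * (-(Pm i j / (Rm i j) ^ 2) * (inner ℝ (rm i - rm j) (vm i - vm j) : ℝ))) :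
    ∑ i, m i • vh i = ∑ i, m i • v i :=
  stmt14_general n γ Δt m v vh rm R P Rh Ph Rm Pm hRsymm hPsymm hRhsymm hPhsymm hRm hPm hstep_v
end

section
/- Consider one step of the midpoint scheme for the fully extended n-body system (as above). Then for each pair i ≠ j: r̂_{ij} ρ̂_{ij} = r_{ij} ρ_{ij} and r̂_{ij}² − ‖r̂ᵢ − r̂ⱼ‖² = r_{ij}² − ‖rᵢ − rⱼ‖². -/
/-!
The midpoint rule conserves every quadratic first integral exactly: for a bilinear `B` and
midpoints `x̄ = (x + x̂)/2`, `ȳ = (y + ŷ)/2` one has `B(x̂, ŷ) − B(x, y) = B(x̂ − x, ȳ) + B(x̄, ŷ − y)`,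
the discrete product rule. Along the extended system both `R ρ` and `R² − ‖rᵢ − rⱼ‖²` are quadratic
first integrals of a pair, since `Ṙ ρ + R ρ̇ = 0` and `R Ṙ = ⟪rᵢ − rⱼ, vᵢ − vⱼ⟫`; evaluating the
right-hand sides at the midpoint makes the same cancellations happen in the discrete identity.
-/

open RealInnerProductSpace

theorem mul_sub_mul_eq_midpoint (a a' b b' : ℝ) :
    a' * b' - a * b = (a' - a) * ((b + b') / 2) + (a + a') / 2 * (b' - b) := by
  ring

theorem norm_sq_sub_norm_sq_eq_midpoint {F : Type*} [NormedAddCommGroup F] [InnerProductSpace ℝ F]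
    (x x' : F) : ‖x'‖ ^ 2 - ‖x‖ ^ 2 = 2 * ⟪(2 : ℝ)⁻¹ • (x + x'), x' - x⟫ := by
  rw [real_inner_smul_left, inner_add_left, inner_sub_right, inner_sub_right,
    real_inner_self_eq_norm_sq, real_inner_self_eq_norm_sq, real_inner_comm x x']
  ring

theorem midpoint_step_mul_eq {R P Rh Ph Rm Pm Δt S : ℝ}
    (hRm : Rm = (R + Rh) / 2) (hPm : Pm = (P + Ph) / 2) (hRm0 : Rm ≠ 0)
    (hR : Rh - R = Δt * (1 / Rm * S)) (hP : Ph - P = Δt * (-(Pm / Rm ^ 2) * S)) :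
    Rh * Ph = R * P := by
  rw [← sub_eq_zero, mul_sub_mul_eq_midpoint, ← hRm, ← hPm, hR, hP]
  field_simp
  ring

theorem midpoint_step_sq_sub_norm_sq_eq {F : Type*} [NormedAddCommGroup F]
    [InnerProductSpace ℝ F] {x xh xm w : F} {R Rh Rm Δt : ℝ}
    (hxm : xm = (2 : ℝ)⁻¹ • (x + xh)) (hRm : Rm = (R + Rh) / 2) (hRm0 : Rm ≠ 0)
    (hx : xh - x = Δt • w) (hR : Rh - R = Δt * (1 / Rm * ⟪xm, w⟫)) :
    Rh ^ 2 - ‖xh‖ ^ 2 = R ^ 2 - ‖x‖ ^ 2 := by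
  have hnorm : ‖xh‖ ^ 2 - ‖x‖ ^ 2 = 2 * Δt * ⟪xm, w⟫ := by
    rw [norm_sq_sub_norm_sq_eq_midpoint, ← hxm, hx, real_inner_smul_right]
    ring
  have hsq : Rh ^ 2 - R ^ 2 = 2 * Δt * ⟪xm, w⟫ := by
    rw [sq, sq, mul_sub_mul_eq_midpoint, ← hRm, hR]
    field_simp
    ring
  linarith

theorem stmt15_general (n : ℕ) (Δt : ℝ)
    (r rh rm vm : Fin n → EuclideanSpace ℝ (Fin 3))
    (R P Rh Ph Rm Pm : Fin n → Fin n → ℝ)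
    (hrm : ∀ i, rm i = (2 : ℝ)⁻¹ • (r i + rh i))
    (hRm : ∀ i j, Rm i j = (R i j + Rh i j) / 2)
    (hPm : ∀ i j, Pm i j = (P i j + Ph i j) / 2)
    (hRm0 : ∀ i j, i ≠ j → Rm i j ≠ 0)
    (hstep_r : ∀ i, rh i - r i = Δt • vm i)
    (hstep_R : ∀ i j, i ≠ j → Rh i j - R i j =
      Δt * ((1 / Rm i j) * (inner ℝ (rm i - rm j) (vm i - vm j) : ℝ)))
    (hstep_P : ∀ i j, i ≠ j → Ph i j - P i j =
      Δt * (-(Pm i j / (Rm i j) ^ 2) * (inner ℝ (rm i - rm j) (vm i - vm j) : ℝ))) :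
    ∀ i j, i ≠ j →
      Rh i j * Ph i j = R i j * P i j ∧
      (Rh i j) ^ 2 - ‖rh i - rh j‖ ^ 2 = (R i j) ^ 2 - ‖r i - r j‖ ^ 2 := by
  intro i j hij
  have hxm : rm i - rm j = (2 : ℝ)⁻¹ • ((r i - r j) + (rh i - rh j)) := by
    rw [hrm i, hrm j, ← smul_sub]
    abel_nf
  have hx : (rh i - rh j) - (r i - r j) = Δt • (vm i - vm j) := by
    rw [smul_sub, ← hstep_r i, ← hstep_r j]
    abel
  exact ⟨midpoint_step_mul_eq (hRm i j) (hPm i j) (hRm0 i j hij) (hstep_R i j hij)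
      (hstep_P i j hij),
    midpoint_step_sq_sub_norm_sq_eq hxm (hRm i j) (hRm0 i j hij) hx (hstep_R i j hij)⟩

/-- One step of the midpoint scheme for the fully extended n-body system preserves, for each
pair `i ≠ j`, the products `Rᵢⱼ ρᵢⱼ` and the differences `Rᵢⱼ² − ‖rᵢ − rⱼ‖²`. -/
theorem stmt15 (n : ℕ) (γ Δt : ℝ) (hγ : 0 < γ)
    (m : Fin n → ℝ) (hm : ∀ i, 0 < m i)
    (r v rh vh rm vm : Fin n → EuclideanSpace ℝ (Fin 3))
    (R P Rh Ph Rm Pm : Fin n → Fin n → ℝ)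
    (hRsymm : ∀ i j, R i j = R j i) (hPsymm : ∀ i j, P i j = P j i)
    (hRhsymm : ∀ i j, Rh i j = Rh j i) (hPhsymm : ∀ i j, Ph i j = Ph j i)
    (hrm : ∀ i, rm i = (2 : ℝ)⁻¹ • (r i + rh i))
    (hvm : ∀ i, vm i = (2 : ℝ)⁻¹ • (v i + vh i))
    (hRm : ∀ i j, Rm i j = (R i j + Rh i j) / 2)
    (hPm : ∀ i j, Pm i j = (P i j + Ph i j) / 2)
    (hRm0 : ∀ i j, i ≠ j → Rm i j ≠ 0)
    (hstep_r : ∀ i, rh i - r i = Δt • vm i)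
    (hstep_v : ∀ i, m i • (vh i - v i) =
      Δt • ∑ j ∈ Finset.univ.erase i,
        ((γ * m i * m j * Pm i j) / (Rm i j) ^ 2) • (rm j - rm i))
    (hstep_R : ∀ i j, i ≠ j → Rh i j - R i j =
      Δt * ((1 / Rm i j) * (inner ℝ (rm i - rm j) (vm i - vm j) : ℝ)))
    (hstep_P : ∀ i j, i ≠ j → Ph i j - P i j =
      Δt * (-(Pm i j / (Rm i j) ^ 2) * (inner ℝ (rm i - rm j) (vm i - vm j) : ℝ))) :
    ∀ i j, i ≠ j →
      Rh i j * Ph i j = R i j * P i j ∧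
      (Rh i j) ^ 2 - ‖rh i - rh j‖ ^ 2 = (R i j) ^ 2 - ‖r i - r j‖ ^ 2 :=
  stmt15_general n Δt r rh rm vm R P Rh Ph Rm Pm hrm hRm hPm hRm0 hstep_r hstep_R hstep_P
end

section
/- Consider one step of the midpoint scheme for the fully extended n-body system. Then the quadratic energy is preserved: ∑ᵢ (mᵢ/2)‖v̂ᵢ‖² − γ ∑_{i<j} mᵢ mⱼ ρ̂_{ij} = ∑ᵢ (mᵢ/2)‖vᵢ‖² − γ ∑_{i<j} mᵢ mⱼ ρ_{ij}. -/
/-!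
At the midpoint `(v + v̂)/2` the kinetic-energy change of particle `i` is exactly
`⟪mᵢ (v̂ᵢ - vᵢ), (vᵢ + v̂ᵢ)/2⟫`, i.e. `Δt` times the work of the forces on `i`. The pair forces
`cᵢⱼ (rⱼ - rᵢ)` are antisymmetric because `cᵢⱼ = γ mᵢ mⱼ ρᵢⱼ / rᵢⱼ²` is symmetric at the midpoint,
so the total work regroups over pairs `i < j` into `-Δt cᵢⱼ ⟪rᵢ - rⱼ, vᵢ - vⱼ⟫`, which the
`ρ`-equation identifies with `γ mᵢ mⱼ (ρ̂ᵢⱼ - ρᵢⱼ)`.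
-/

open Finset
open scoped InnerProductSpace

theorem Finset.sum_erase_eq_sum_filter_lt_add {ι M : Type*} [Fintype ι] [LinearOrder ι]
    [AddCommMonoid M] (f : ι → ι → M) :
    ∑ i, ∑ j ∈ univ.erase i, f i j = ∑ i, ∑ j ∈ univ.filter (i < ·), (f i j + f j i) := by
  have hsplit : ∀ i, ∑ j ∈ univ.erase i, f i j
      = ∑ j ∈ univ.filter (i < ·), f i j + ∑ j ∈ univ.filter (· < i), f i j := by
    intro i
    rw [← sum_union (disjoint_filter.2 fun j _ h h' => lt_asymm h h')]
    congr 1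
    ext j
    simp [ne_comm, lt_or_lt_iff_ne]
  have hswap : ∑ i, ∑ j ∈ univ.filter (· < i), f i j = ∑ i, ∑ j ∈ univ.filter (i < ·), f j i :=
    sum_comm' fun i j => by simp
  simp only [hsplit, sum_add_distrib, hswap]

theorem real_inner_sub_midpoint {E : Type*} [NormedAddCommGroup E] [InnerProductSpace ℝ E]
    (x y : E) : ⟪y - x, (2 : ℝ)⁻¹ • (x + y)⟫_ℝ = ‖y‖ ^ 2 / 2 - ‖x‖ ^ 2 / 2 := by
  rw [real_inner_smul_right, inner_sub_left, inner_add_right, inner_add_right,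
    real_inner_self_eq_norm_sq, real_inner_self_eq_norm_sq, real_inner_comm x y]
  ring

theorem kinetic_energy_midpoint_step {ι E : Type*} [Fintype ι] [LinearOrder ι]
    [NormedAddCommGroup E] [InnerProductSpace ℝ E] (Δt : ℝ) (m : ι → ℝ)
    (v vh vm : ι → E) (F : ι → ι → E) (hF : ∀ i j, F j i = -F i j)
    (hvm : ∀ i, vm i = (2 : ℝ)⁻¹ • (v i + vh i))
    (hstep : ∀ i, m i • (vh i - v i) = Δt • ∑ j ∈ univ.erase i, F i j) :
    ∑ i, m i / 2 * ‖vh i‖ ^ 2 = ∑ i, m i / 2 * ‖v i‖ ^ 2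
      + ∑ i, ∑ j ∈ univ.filter (i < ·), Δt * ⟪F i j, vm i - vm j⟫_ℝ := by
  have hpart : ∀ i, m i / 2 * ‖vh i‖ ^ 2 - m i / 2 * ‖v i‖ ^ 2
      = ∑ j ∈ univ.erase i, Δt * ⟪F i j, vm i⟫_ℝ := by
    intro i
    calc m i / 2 * ‖vh i‖ ^ 2 - m i / 2 * ‖v i‖ ^ 2
        = ⟪m i • (vh i - v i), vm i⟫_ℝ := by
          rw [real_inner_smul_left, hvm, real_inner_sub_midpoint]; ring
      _ = _ := by rw [hstep, real_inner_smul_left, sum_inner, mul_sum]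
  have hpair : ∀ i j, Δt * ⟪F i j, vm i⟫_ℝ + Δt * ⟪F j i, vm j⟫_ℝ
      = Δt * ⟪F i j, vm i - vm j⟫_ℝ := by
    intro i j
    rw [hF i j, inner_neg_left, inner_sub_right]; ring
  rw [← sub_eq_iff_eq_add', ← sum_sub_distrib, sum_congr rfl fun i _ => hpart i,
    sum_erase_eq_sum_filter_lt_add]
  simp only [hpair]

theorem stmt16_general (n : ℕ) (γ Δt : ℝ)
    (m : Fin n → ℝ)
    (v vh rm vm : Fin n → EuclideanSpace ℝ (Fin 3))
    (R P Rh Ph Rm Pm : Fin n → Fin n → ℝ)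
    (hRsymm : ∀ i j, R i j = R j i) (hPsymm : ∀ i j, P i j = P j i)
    (hRhsymm : ∀ i j, Rh i j = Rh j i) (hPhsymm : ∀ i j, Ph i j = Ph j i)
    (hvm : ∀ i, vm i = (2 : ℝ)⁻¹ • (v i + vh i))
    (hRm : ∀ i j, Rm i j = (R i j + Rh i j) / 2)
    (hPm : ∀ i j, Pm i j = (P i j + Ph i j) / 2)
    (hstep_v : ∀ i, m i • (vh i - v i) =
      Δt • ∑ j ∈ Finset.univ.erase i,
        ((γ * m i * m j * Pm i j) / (Rm i j) ^ 2) • (rm j - rm i))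
    (hstep_P : ∀ i j, i ≠ j → Ph i j - P i j =
      Δt * (-(Pm i j / (Rm i j) ^ 2) * (inner ℝ (rm i - rm j) (vm i - vm j) : ℝ))) :
    (∑ i, (m i / 2) * ‖vh i‖ ^ 2)
      - γ * ∑ i, ∑ j ∈ Finset.univ.filter (fun j => i < j), m i * m j * Ph i j
    = (∑ i, (m i / 2) * ‖v i‖ ^ 2)
      - γ * ∑ i, ∑ j ∈ Finset.univ.filter (fun j => i < j), m i * m j * P i j := by
  set c : Fin n → Fin n → ℝ := fun i j => γ * m i * m j * Pm i j / Rm i j ^ 2 with hc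
  have hc_symm : ∀ i j, c i j = c j i := fun i j => by
    simp only [hc, hRm, hPm, hRsymm i j, hRhsymm i j, hPsymm i j, hPhsymm i j]; ring
  have hKE := kinetic_energy_midpoint_step Δt m v vh vm (fun i j => c i j • (rm j - rm i))
    (fun i j => by rw [hc_symm j i, ← smul_neg, neg_sub]) hvm hstep_v
  have hpot : ∀ i, ∀ j ∈ univ.filter (i < ·), Δt * ⟪c i j • (rm j - rm i), vm i - vm j⟫_ℝ
      = γ * (m i * m j * Ph i j) - γ * (m i * m j * P i j) := fun i j hij => by
    rw [real_inner_smul_left, ← neg_sub (rm i) (rm j), inner_neg_left, hc]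
    linear_combination (-γ * m i * m j) * hstep_P i j (mem_filter.1 hij).2.ne
  rw [hKE, sum_congr rfl fun i _ => sum_congr rfl (hpot i)]
  simp only [sum_sub_distrib, mul_sum]
  ring

/-- One step of the midpoint scheme for the fully extended n-body system preserves the
quadratic energy `∑ᵢ (mᵢ/2)‖vᵢ‖² − γ ∑_{i<j} mᵢ mⱼ ρᵢⱼ`. -/
theorem stmt16 (n : ℕ) (γ Δt : ℝ) (hγ : 0 < γ)
    (m : Fin n → ℝ) (hm : ∀ i, 0 < m i)
    (r v rh vh rm vm : Fin n → EuclideanSpace ℝ (Fin 3))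
    (R P Rh Ph Rm Pm : Fin n → Fin n → ℝ)
    (hRsymm : ∀ i j, R i j = R j i) (hPsymm : ∀ i j, P i j = P j i)
    (hRhsymm : ∀ i j, Rh i j = Rh j i) (hPhsymm : ∀ i j, Ph i j = Ph j i)
    (hrm : ∀ i, rm i = (2 : ℝ)⁻¹ • (r i + rh i))
    (hvm : ∀ i, vm i = (2 : ℝ)⁻¹ • (v i + vh i))
    (hRm : ∀ i j, Rm i j = (R i j + Rh i j) / 2)
    (hPm : ∀ i j, Pm i j = (P i j + Ph i j) / 2)
    (hRm0 : ∀ i j, i ≠ j → Rm i j ≠ 0)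
    (hstep_r : ∀ i, rh i - r i = Δt • vm i)
    (hstep_v : ∀ i, m i • (vh i - v i) =
      Δt • ∑ j ∈ Finset.univ.erase i,
        ((γ * m i * m j * Pm i j) / (Rm i j) ^ 2) • (rm j - rm i))
    (hstep_R : ∀ i j, i ≠ j → Rh i j - R i j =
      Δt * ((1 / Rm i j) * (inner ℝ (rm i - rm j) (vm i - vm j) : ℝ)))
    (hstep_P : ∀ i j, i ≠ j → Ph i j - P i j =
      Δt * (-(Pm i j / (Rm i j) ^ 2) * (inner ℝ (rm i - rm j) (vm i - vm j) : ℝ))) :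
    (∑ i, (m i / 2) * ‖vh i‖ ^ 2)
      - γ * ∑ i, ∑ j ∈ Finset.univ.filter (fun j => i < j), m i * m j * Ph i j
    = (∑ i, (m i / 2) * ‖v i‖ ^ 2)
      - γ * ∑ i, ∑ j ∈ Finset.univ.filter (fun j => i < j), m i * m j * P i j :=
  stmt16_general n γ Δt m v vh rm vm R P Rh Ph Rm Pm hRsymm hPsymm hRhsymm hPhsymm hvm hRm hPm
    hstep_v hstep_P
end

section
/- Consider one step of the midpoint scheme for the fully extended 3-dimensional n-body system. Then the angular momentum is preserved: ∑ᵢ mᵢ (r̂ᵢ × v̂ᵢ) = ∑ᵢ mᵢ (rᵢ × vᵢ). -/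
/-!
The midpoint step gives `r̂ᵢ × v̂ᵢ - rᵢ × vᵢ = r̄ᵢ × (v̂ᵢ - vᵢ)` with `r̄ᵢ` the midpoint position,
because the remaining term `(r̂ᵢ - rᵢ) × v̄ᵢ = Δt v̄ᵢ × v̄ᵢ` vanishes. The velocity update then turns
the change of angular momentum into `Δt ∑ᵢ ∑_{j ≠ i} cᵢⱼ r̄ᵢ × r̄ⱼ` with symmetric coefficients `cᵢⱼ`,
which is zero by antisymmetry of the cross product: the discrete pair forces are central.
-/

/-- The cross product on `EuclideanSpace ℝ (Fin 3)`. -/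
noncomputable def cross3 (u w : EuclideanSpace ℝ (Fin 3)) : EuclideanSpace ℝ (Fin 3) :=
  (EuclideanSpace.equiv (Fin 3) ℝ).symm
    (crossProduct (EuclideanSpace.equiv (Fin 3) ℝ u) (EuclideanSpace.equiv (Fin 3) ℝ w))

open Finset

theorem Finset.sum_sum_erase_eq_zero_of_antisymm {ι M : Type*} [Fintype ι] [DecidableEq ι]
    [AddCommGroup M] (f : ι → ι → M) (hf : ∀ i j, f i j = -f j i) :
    ∑ i, ∑ j ∈ univ.erase i, f i j = 0 := by
  calc ∑ i, ∑ j ∈ univ.erase i, f i j = ∑ p ∈ univ.offDiag, f p.1 p.2 :=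
        (sum_finset_product univ.offDiag univ (fun i => univ.erase i) (by simp [ne_comm])
          (f := fun p => f p.1 p.2)).symm
    _ = 0 := sum_involution (fun p _ => p.swap) (fun p _ => by simp [hf p.1 p.2])
      (fun p hp _ => by simpa [Prod.ext_iff, eq_comm] using (mem_offDiag.1 hp).2.2)
      (fun p hp => by simpa [ne_comm] using hp) (fun p _ => p.swap_swap)

section Cross3

local notation "E" => EuclideanSpace ℝ (Fin 3)

lemma cross3_add_left (u v w : E) : cross3 (u + v) w = cross3 u w + cross3 v w := by
  simp [cross3, map_add]

lemma cross3_add_right (u v w : E) : cross3 u (v + w) = cross3 u v + cross3 u w := by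
  simp [cross3, map_add]

lemma cross3_sub_left (u v w : E) : cross3 (u - v) w = cross3 u w - cross3 v w := by
  simp [cross3, map_sub]

lemma cross3_sub_right (u v w : E) : cross3 u (v - w) = cross3 u v - cross3 u w := by
  simp [cross3, map_sub]

lemma cross3_smul_left (s : ℝ) (u w : E) : cross3 (s • u) w = s • cross3 u w := by
  simp [cross3, map_smul]

lemma cross3_smul_right (s : ℝ) (u w : E) : cross3 u (s • w) = s • cross3 u w := by
  simp [cross3, map_smul]

lemma cross3_sum_right {ι : Type*} (s : Finset ι) (u : E) (g : ι → E) :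
    cross3 u (∑ j ∈ s, g j) = ∑ j ∈ s, cross3 u (g j) := by
  simp [cross3, map_sum]

lemma cross3_self (u : E) : cross3 u u = 0 := by
  simp [cross3, cross_self]

lemma cross3_anticomm (u w : E) : cross3 u w = -cross3 w u := by
  rw [cross3, ← cross_anticomm, map_neg, cross3]

theorem cross3_sub_cross3_of_midpoint_step {r v rh vh : E} {Δt : ℝ}
    (h : rh - r = Δt • (2 : ℝ)⁻¹ • (v + vh)) :
    cross3 rh vh - cross3 r v = cross3 ((2 : ℝ)⁻¹ • (r + rh)) (vh - v) := by
  have hpos : cross3 (rh - r) ((2 : ℝ)⁻¹ • (v + vh)) = 0 := by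
    rw [h, cross3_smul_left, cross3_self, smul_zero]
  rw [← sub_eq_zero, ← hpos]
  simp only [cross3_add_left, cross3_add_right, cross3_sub_left, cross3_sub_right,
    cross3_smul_left, cross3_smul_right]
  module

theorem sum_cross3_sum_smul_sub_eq_zero {ι : Type*} [Fintype ι] [DecidableEq ι] (x : ι → E)
    (c : ι → ι → ℝ) (hc : ∀ i j, c i j = c j i) :
    ∑ i, cross3 (x i) (∑ j ∈ univ.erase i, c i j • (x j - x i)) = 0 := by
  simp_rw [cross3_sum_right, cross3_smul_right, cross3_sub_right, cross3_self, sub_zero]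
  exact sum_sum_erase_eq_zero_of_antisymm _ fun i j => by
    rw [hc, cross3_anticomm, smul_neg]

end Cross3

theorem stmt17_general (n : ℕ) (γ Δt : ℝ)
    (m : Fin n → ℝ)
    (r v rh vh rm vm : Fin n → EuclideanSpace ℝ (Fin 3))
    (R P Rh Ph Rm Pm : Fin n → Fin n → ℝ)
    (hRsymm : ∀ i j, R i j = R j i) (hPsymm : ∀ i j, P i j = P j i)
    (hRhsymm : ∀ i j, Rh i j = Rh j i) (hPhsymm : ∀ i j, Ph i j = Ph j i)
    (hrm : ∀ i, rm i = (2 : ℝ)⁻¹ • (r i + rh i))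
    (hvm : ∀ i, vm i = (2 : ℝ)⁻¹ • (v i + vh i))
    (hRm : ∀ i j, Rm i j = (R i j + Rh i j) / 2)
    (hPm : ∀ i j, Pm i j = (P i j + Ph i j) / 2)
    (hstep_r : ∀ i, rh i - r i = Δt • vm i)
    (hstep_v : ∀ i, m i • (vh i - v i) =
      Δt • ∑ j ∈ Finset.univ.erase i,
        ((γ * m i * m j * Pm i j) / (Rm i j) ^ 2) • (rm j - rm i)) :
    ∑ i, m i • cross3 (rh i) (vh i) = ∑ i, m i • cross3 (r i) (v i) := by
  have hc : ∀ i j, γ * m i * m j * Pm i j / Rm i j ^ 2 = γ * m j * m i * Pm j i / Rm j i ^ 2 := by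
    intro i j
    rw [hPm, hPm, hRm, hRm, hPsymm, hPhsymm, hRsymm, hRhsymm]
    ring
  rw [← sub_eq_zero, ← sum_sub_distrib]
  calc ∑ i, (m i • cross3 (rh i) (vh i) - m i • cross3 (r i) (v i))
      = ∑ i, cross3 (rm i) (m i • (vh i - v i)) := by
        refine sum_congr rfl fun i _ => ?_
        rw [← smul_sub, cross3_sub_cross3_of_midpoint_step (hvm i ▸ hstep_r i), ← hrm,
          cross3_smul_right]
    _ = Δt • ∑ i, cross3 (rm i)
          (∑ j ∈ univ.erase i, (γ * m i * m j * Pm i j / Rm i j ^ 2) • (rm j - rm i)) := by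
        simp_rw [hstep_v, cross3_smul_right, smul_sum]
    _ = 0 := by rw [sum_cross3_sum_smul_sub_eq_zero rm _ hc, smul_zero]

/-- One step of the midpoint scheme for the fully extended n-body system preserves the
angular momentum `∑ᵢ mᵢ (rᵢ × vᵢ)`. -/
theorem stmt17 (n : ℕ) (γ Δt : ℝ) (hγ : 0 < γ)
    (m : Fin n → ℝ) (hm : ∀ i, 0 < m i)
    (r v rh vh rm vm : Fin n → EuclideanSpace ℝ (Fin 3))
    (R P Rh Ph Rm Pm : Fin n → Fin n → ℝ)
    (hRsymm : ∀ i j, R i j = R j i) (hPsymm : ∀ i j, P i j = P j i)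
    (hRhsymm : ∀ i j, Rh i j = Rh j i) (hPhsymm : ∀ i j, Ph i j = Ph j i)
    (hrm : ∀ i, rm i = (2 : ℝ)⁻¹ • (r i + rh i))
    (hvm : ∀ i, vm i = (2 : ℝ)⁻¹ • (v i + vh i))
    (hRm : ∀ i j, Rm i j = (R i j + Rh i j) / 2)
    (hPm : ∀ i j, Pm i j = (P i j + Ph i j) / 2)
    (hRm0 : ∀ i j, i ≠ j → Rm i j ≠ 0)
    (hstep_r : ∀ i, rh i - r i = Δt • vm i)
    (hstep_v : ∀ i, m i • (vh i - v i) =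
      Δt • ∑ j ∈ Finset.univ.erase i,
        ((γ * m i * m j * Pm i j) / (Rm i j) ^ 2) • (rm j - rm i))
    (hstep_R : ∀ i j, i ≠ j → Rh i j - R i j =
      Δt * ((1 / Rm i j) * (inner ℝ (rm i - rm j) (vm i - vm j) : ℝ)))
    (hstep_P : ∀ i j, i ≠ j → Ph i j - P i j =
      Δt * (-(Pm i j / (Rm i j) ^ 2) * (inner ℝ (rm i - rm j) (vm i - vm j) : ℝ))) :
    ∑ i, m i • cross3 (rh i) (vh i) = ∑ i, m i • cross3 (r i) (v i) :=
  stmt17_general n γ Δt m r v rh vh rm vm R P Rh Ph Rm Pm hRsymm hPsymm hRhsymm hPhsymm hrm hvm hRm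
    hPm hstep_r hstep_v
end
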